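/- Let Ω ⊂ ℝ^N be a bounded domain, 2 < p < 2N/(N-2), λ₁, λ₂ ∈ ℝ, and β < 1. Then there exists a constant C_β > 0 such that every pair (u,v) ∈ H¹₀(Ω) × H¹₀(Ω), (u,v) ≠ (0,0), satisfying ∫_Ω (|∇u|² − λ₁u² + |∇v|² − λ₂v²) + ∫_Ω (|u|^p + |v|^p) − 2β∫_Ω |u|^{p/2}|v|^{p/2} = 0 obeys ‖∇u‖₂² + ‖∇v‖₂² ≤ C_β². Moreover, if β ≤ 0 one may take C_β ≤ C₀ with C₀ independent of β. -/

import Mathlib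

open MeasureTheory Real Filter Topology Bornology

noncomputable section

abbrev Euc (N : ℕ) := EuclideanSpace ℝ (Fin N)

/-- A (loose) model of membership in `H¹₀(Ω)` for real functions on `ℝ^N`:
zero outside `Ω`, differentiable on `Ω`, with the natural integrability properties. -/
def H10 {N : ℕ} (Ω : Set (Euc N)) (p : ℝ) (u : Euc N → ℝ) : Prop :=
  (∀ x ∉ Ω, u x = 0) ∧ DifferentiableOn ℝ u Ω ∧
  IntegrableOn (fun x => ‖gradient u x‖ ^ 2) Ω ∧
  IntegrableOn (fun x => (u x) ^ 2) Ω ∧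
  IntegrableOn (fun x => |u x| ^ p) Ω

/-- Squared Dirichlet norm `‖∇u‖₂²`. -/
def nrm2 {N : ℕ} (Ω : Set (Euc N)) (u : Euc N → ℝ) : ℝ :=
  ∫ x in Ω, ‖gradient u x‖ ^ 2

/-- The quadratic part `Q(u,v) = ∫ |∇u|² - λ₁u² + |∇v|² - λ₂v²`. -/
def Qf {N : ℕ} (Ω : Set (Euc N)) (l1 l2 : ℝ) (u v : Euc N → ℝ) : ℝ :=
  ∫ x in Ω, (‖gradient u x‖ ^ 2 - l1 * (u x) ^ 2 + (‖gradient v x‖ ^ 2 - l2 * (v x) ^ 2))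

/-- The `p`-homogeneous part `P(u,v) = ∫ |u|^p + |v|^p - 2β ∫ |u|^{p/2}|v|^{p/2}`. -/
def Pf {N : ℕ} (Ω : Set (Euc N)) (p β : ℝ) (u v : Euc N → ℝ) : ℝ :=
  (∫ x in Ω, (|u x| ^ p + |v x| ^ p)) - 2 * β * ∫ x in Ω, |u x| ^ (p / 2) * |v x| ^ (p / 2)

/-- The energy functional `J_β` of the logistic system. -/
def Jf {N : ℕ} (Ω : Set (Euc N)) (p l1 l2 β : ℝ) (u v : Euc N → ℝ) : ℝ :=
  (1 / 2) * Qf Ω l1 l2 u v + (1 / p) * ∫ x in Ω, (|u x| ^ p + |v x| ^ p)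
    - (2 * β / p) * ∫ x in Ω, |u x| ^ (p / 2) * |v x| ^ (p / 2)

/-- The Laplacian `Δu` as the sum of the pure second derivatives. -/
def lap {N : ℕ} (u : Euc N → ℝ) (x : Euc N) : ℝ :=
  ∑ i : Fin N, iteratedFDeriv ℝ 2 u x ![EuclideanSpace.single i 1, EuclideanSpace.single i 1]

/-- The Gateaux derivative `J_β'(u,v)(φ,ψ)` as in (1.5) of the paper. -/
def Jd {N : ℕ} (Ω : Set (Euc N)) (p l1 l2 β : ℝ) (u v φ ψ : Euc N → ℝ) : ℝ :=
  (∫ x in Ω, ((inner ℝ (gradient u x) (gradient φ x) : ℝ)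
      + (inner ℝ (gradient v x) (gradient ψ x) : ℝ) - l1 * u x * φ x - l2 * v x * ψ x)) +
  (∫ x in Ω, (|u x| ^ (p - 2) * u x * φ x + |v x| ^ (p - 2) * v x * ψ x)) -
  β * ∫ x in Ω, (|u x| ^ (p / 2 - 2) * u x * |v x| ^ (p / 2) * φ x
      + |u x| ^ (p / 2) * |v x| ^ (p / 2 - 2) * v x * ψ x)

/-- The scalar logistic energy `J_i(u) = ½∫(|∇u|² - λu²) + (1/p)∫|u|^p`. -/
def J1e {N : ℕ} (Ω : Set (Euc N)) (p l : ℝ) (u : Euc N → ℝ) : ℝ :=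
  (1 / 2) * ∫ x in Ω, (‖gradient u x‖ ^ 2 - l * (u x) ^ 2) + (1 / p) * ∫ x in Ω, |u x| ^ p

/-- The second derivative quadratic form `D²J₁(w)[e,e]`. -/
def D2e {N : ℕ} (Ω : Set (Euc N)) (p l : ℝ) (w e : Euc N → ℝ) : ℝ :=
  (∫ x in Ω, (‖gradient e x‖ ^ 2 - l * (e x) ^ 2)) + (p - 1) * ∫ x in Ω, (w x) ^ (p - 2) * (e x) ^ 2


/-!
On the Nehari set the quadratic part is minus the `p`-homogeneous part. Since
`2 |u|^{p/2} |v|^{p/2} ≤ |u|^p + |v|^p`, this gives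
`‖∇u‖² + ‖∇v‖² + (1 - β⁺) A ≤ λ⁺ ∫ (u² + v²)` with `A = ∫ (|u|^p + |v|^p)`, and Hölder on the
bounded domain bounds the right-hand side by `2 λ⁺ |Ω|^{1-2/p} A^{2/p}`. As `2/p < 1`, the term
`(1 - β⁺) A` absorbs it, which bounds `A` and then the Dirichlet norms by a constant that depends
on `β` only through `1 - β⁺`.
-/

open Set

theorem integral_le_integral_rpow_mul_measureReal_univ {X : Type*} [MeasurableSpace X]
    {μ : Measure X} [IsFiniteMeasure μ] {q : ℝ} (hq : 1 < q) {f : X → ℝ} (hf0 : 0 ≤ᵐ[μ] f)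
    (hf : AEStronglyMeasurable f μ) (hfq : Integrable (fun x => f x ^ q) μ) :
    ∫ x, f x ∂μ ≤ (∫ x, f x ^ q ∂μ) ^ (1 / q) * μ.real univ ^ (1 - 1 / q) := by
  have hconj : q.HolderConjugate q.conjExponent := .conjExponent hq
  have hf_memLp : MemLp f (ENNReal.ofReal q) μ := by
    rw [← integrable_norm_rpow_iff hf (by simp; linarith) (by simp),
      ENNReal.toReal_ofReal (by linarith)]
    refine hfq.congr ?_
    filter_upwards [hf0] with x hx
    rw [Real.norm_of_nonneg hx]
  have holder := integral_mul_le_Lp_mul_Lq_of_nonneg hconj hf0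
    (Eventually.of_forall fun _ => zero_le_one) hf_memLp (memLp_const (1 : ℝ))
  have hinv : 1 / q.conjExponent = 1 - 1 / q := by
    have := hconj.inv_add_inv_eq_one
    rw [one_div, one_div]
    linarith
  simpa [integral_const, hinv] using holder

theorem integral_sq_le_integral_abs_rpow_mul {X : Type*} [MeasurableSpace X]
    {μ : Measure X} [IsFiniteMeasure μ] {p : ℝ} (hp : 2 < p) {u : X → ℝ}
    (hu2 : Integrable (fun x => u x ^ 2) μ) (hup : Integrable (fun x => |u x| ^ p) μ) :
    ∫ x, u x ^ 2 ∂μ ≤ (∫ x, |u x| ^ p ∂μ) ^ (2 / p) * μ.real univ ^ (1 - 2 / p) := by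
  have hsq : ∀ x, (u x ^ 2) ^ (p / 2) = |u x| ^ p := fun x => by
    rw [← sq_abs, ← Real.rpow_natCast, ← Real.rpow_mul (abs_nonneg _)]
    ring_nf
  have h := integral_le_integral_rpow_mul_measureReal_univ (μ := μ) (by linarith : 1 < p / 2)
    (Eventually.of_forall fun x => sq_nonneg (u x)) hu2.aestronglyMeasurable
    (by simpa only [hsq] using hup)
  simpa only [hsq, one_div_div] using h

theorem two_mul_rpow_half_mul_rpow_half_le {a b : ℝ} (ha : 0 ≤ a) (hb : 0 ≤ b) (p : ℝ) :
    2 * (a ^ (p / 2) * b ^ (p / 2)) ≤ a ^ p + b ^ p := by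
  have hsq : ∀ {c : ℝ}, 0 ≤ c → (c ^ (p / 2)) ^ 2 = c ^ p := fun hc => by
    rw [← Real.rpow_mul_natCast hc]
    ring_nf
  rw [← hsq ha, ← hsq hb, ← mul_assoc]
  exact two_mul_le_add_sq _ _

theorem rpow_le_of_mul_le_mul_rpow {A D γ r : ℝ} (hA : 0 ≤ A) (hD : 0 ≤ D) (hγ : 0 < γ)
    (hr0 : 0 < r) (hr1 : r < 1) (h : γ * A ≤ D * A ^ r) :
    A ^ r ≤ (D / γ) ^ (r / (1 - r)) := by
  rcases hA.eq_or_lt with rfl | hA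
  · rw [Real.zero_rpow hr0.ne']
    positivity
  have h1r : 0 < 1 - r := by linarith
  have hA1r : A ^ (1 - r) ≤ D / γ := by
    rw [Real.rpow_sub hA, Real.rpow_one, div_le_div_iff₀ (by positivity) hγ]
    linarith
  calc A ^ r = (A ^ (1 - r)) ^ (r / (1 - r)) := by
        rw [← Real.rpow_mul hA.le, mul_div_cancel₀ _ h1r.ne']
    _ ≤ (D / γ) ^ (r / (1 - r)) := by gcongr

theorem le_of_add_mul_le_mul_rpow {G A D γ r : ℝ} (hG : 0 ≤ G) (hA : 0 ≤ A) (hD : 0 ≤ D)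
    (hγ : 0 < γ) (hr0 : 0 < r) (hr1 : r < 1) (h : G + γ * A ≤ D * A ^ r) :
    G ≤ D * (D / γ) ^ (r / (1 - r)) := by
  have hγA : γ * A ≤ D * A ^ r := by nlinarith
  calc G ≤ D * A ^ r := by nlinarith
    _ ≤ D * (D / γ) ^ (r / (1 - r)) := by
      gcongr
      exact rpow_le_of_mul_le_mul_rpow hA hD hγ hr0 hr1 hγA

theorem exists_pos_le_sq (E : ℝ) : ∃ C : ℝ, 0 < C ∧ E ≤ C ^ 2 :=
  ⟨|E| + 1, by positivity, by nlinarith [le_abs_self E, abs_nonneg E]⟩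

def nehariConst {N : ℕ} (Ω : Set (Euc N)) (p l1 l2 : ℝ) : ℝ :=
  2 * max (max l1 l2) 0 * volume.real Ω ^ (1 - 2 / p)

section Nehari

variable {N : ℕ} {Ω : Set (Euc N)} {p l1 l2 : ℝ} {u v : Euc N → ℝ}

theorem Qf_eq (hu : H10 Ω p u) (hv : H10 Ω p v) :
    Qf Ω l1 l2 u v =
      nrm2 Ω u - l1 * (∫ x in Ω, u x ^ 2) + (nrm2 Ω v - l2 * ∫ x in Ω, v x ^ 2) := by
  obtain ⟨-, -, huG, hu2, -⟩ := hu
  obtain ⟨-, -, hvG, hv2, -⟩ := hv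
  rw [Qf, nrm2, nrm2, integral_add (f := fun x => ‖gradient u x‖ ^ 2 - l1 * u x ^ 2)
      (g := fun x => ‖gradient v x‖ ^ 2 - l2 * v x ^ 2)
      (Integrable.sub huG (hu2.const_mul l1)) (Integrable.sub hvG (hv2.const_mul l2)),
    integral_sub huG (hu2.const_mul l1), integral_sub hvG (hv2.const_mul l2),
    integral_const_mul, integral_const_mul]

theorem mul_integral_le_Pf {β b : ℝ} (hb : 0 ≤ b) (hβ : β ≤ b) (hu : H10 Ω p u)
    (hv : H10 Ω p v) :
    (1 - b) * ∫ x in Ω, (|u x| ^ p + |v x| ^ p) ≤ Pf Ω p β u v := by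
  have hB : 0 ≤ ∫ x in Ω, |u x| ^ (p / 2) * |v x| ^ (p / 2) :=
    integral_nonneg fun x => by positivity
  have hBA : 2 * ∫ x in Ω, |u x| ^ (p / 2) * |v x| ^ (p / 2) ≤
      ∫ x in Ω, (|u x| ^ p + |v x| ^ p) := by
    rw [← integral_const_mul]
    refine integral_mono_of_nonneg (Eventually.of_forall fun x => by positivity)
      (hu.2.2.2.2.add hv.2.2.2.2) (Eventually.of_forall fun x => ?_)
    exact two_mul_rpow_half_mul_rpow_half_le (abs_nonneg _) (abs_nonneg _) p
  rw [Pf]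
  nlinarith

theorem integral_sq_le_of_H10 (hΩ : IsBounded Ω) (hp : 2 < p) (hu : H10 Ω p u) :
    ∫ x in Ω, u x ^ 2 ≤ (∫ x in Ω, |u x| ^ p) ^ (2 / p) * volume.real Ω ^ (1 - 2 / p) := by
  have : IsFiniteMeasure (volume.restrict Ω) :=
    isFiniteMeasure_restrict.mpr hΩ.measure_lt_top.ne
  simpa only [measureReal_restrict_apply_univ] using
    integral_sq_le_integral_abs_rpow_mul hp hu.2.2.2.1 hu.2.2.2.2

theorem nrm2_add_add_le_of_nehari {β b : ℝ} (hb : 0 ≤ b) (hβ : β ≤ b) (hu : H10 Ω p u)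
    (hv : H10 Ω p v) (h : Qf Ω l1 l2 u v + Pf Ω p β u v = 0) :
    nrm2 Ω u + nrm2 Ω v + (1 - b) * ∫ x in Ω, (|u x| ^ p + |v x| ^ p) ≤
      max (max l1 l2) 0 * ((∫ x in Ω, u x ^ 2) + ∫ x in Ω, v x ^ 2) := by
  have hP := mul_integral_le_Pf hb hβ hu hv
  have hIu : 0 ≤ ∫ x in Ω, u x ^ 2 := integral_nonneg fun x => sq_nonneg _
  have hIv : 0 ≤ ∫ x in Ω, v x ^ 2 := integral_nonneg fun x => sq_nonneg _
  have hl1 : l1 * ∫ x in Ω, u x ^ 2 ≤ max (max l1 l2) 0 * ∫ x in Ω, u x ^ 2 :=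
    mul_le_mul_of_nonneg_right ((le_max_left _ _).trans (le_max_left _ _)) hIu
  have hl2 : l2 * ∫ x in Ω, v x ^ 2 ≤ max (max l1 l2) 0 * ∫ x in Ω, v x ^ 2 :=
    mul_le_mul_of_nonneg_right ((le_max_right _ _).trans (le_max_left _ _)) hIv
  rw [Qf_eq hu hv] at h
  linarith

theorem nrm2_add_le_of_nehari (hΩ : IsBounded Ω) (hp : 2 < p) {β b : ℝ} (hb0 : 0 ≤ b)
    (hb1 : b < 1) (hβ : β ≤ b) (hu : H10 Ω p u) (hv : H10 Ω p v)
    (h : Qf Ω l1 l2 u v + Pf Ω p β u v = 0) :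
    nrm2 Ω u + nrm2 Ω v ≤
      nehariConst Ω p l1 l2 * (nehariConst Ω p l1 l2 / (1 - b)) ^ (2 / (p - 2)) := by
  set A := ∫ x in Ω, (|u x| ^ p + |v x| ^ p)
  set Λ := max (max l1 l2) 0
  set M := volume.real Ω ^ (1 - 2 / p)
  have hA : 0 ≤ A := integral_nonneg fun x => by positivity
  have hΛ : 0 ≤ Λ := le_max_right _ _
  have hM : 0 ≤ M := by positivity
  have holder : ∀ {w : Euc N → ℝ}, H10 Ω p w → (∫ x in Ω, |w x| ^ p) ≤ A →
      ∫ x in Ω, w x ^ 2 ≤ A ^ (2 / p) * M := fun hw hwA =>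
    (integral_sq_le_of_H10 hΩ hp hw).trans <| mul_le_mul_of_nonneg_right
      (Real.rpow_le_rpow (integral_nonneg fun x => by positivity) hwA (by positivity)) hM
  have hAu : ∫ x in Ω, |u x| ^ p ≤ A := integral_mono hu.2.2.2.2 (hu.2.2.2.2.add hv.2.2.2.2)
    fun x => le_add_of_nonneg_right (by positivity)
  have hAv : ∫ x in Ω, |v x| ^ p ≤ A := integral_mono hv.2.2.2.2 (hu.2.2.2.2.add hv.2.2.2.2)
    fun x => le_add_of_nonneg_left (by positivity)
  have hsum : nrm2 Ω u + nrm2 Ω v + (1 - b) * A ≤ nehariConst Ω p l1 l2 * A ^ (2 / p) :=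
    calc _ ≤ Λ * ((∫ x in Ω, u x ^ 2) + ∫ x in Ω, v x ^ 2) :=
          nrm2_add_add_le_of_nehari hb0 hβ hu hv h
      _ ≤ Λ * (A ^ (2 / p) * M + A ^ (2 / p) * M) := by
          gcongr
          exacts [holder hu hAu, holder hv hAv]
      _ = nehariConst Ω p l1 l2 * A ^ (2 / p) := by rw [nehariConst]; ring
  have hexp : 2 / (p - 2) = 2 / p / (1 - 2 / p) := by field_simp
  rw [hexp]
  have hG : 0 ≤ nrm2 Ω u + nrm2 Ω v :=
    add_nonneg (integral_nonneg fun x => by positivity) (integral_nonneg fun x => by positivity)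
  have hD : 0 ≤ nehariConst Ω p l1 l2 := by rw [nehariConst]; positivity
  refine le_of_add_mul_le_mul_rpow hG hA hD (by linarith)
    (by positivity) ?_ hsum
  rw [div_lt_one (by linarith)]
  linarith

end Nehari

theorem stmt_0_general {N : ℕ} (Ω : Set (Euc N)) (hΩb : IsBounded Ω)
    (p l1 l2 : ℝ) (hp1 : 2 < p) :
    (∀ β : ℝ, β < 1 → ∃ C : ℝ, 0 < C ∧ ∀ u v : Euc N → ℝ, H10 Ω p u → H10 Ω p v →
      ¬ (∀ x ∈ Ω, u x = 0 ∧ v x = 0) →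
      Qf Ω l1 l2 u v + Pf Ω p β u v = 0 →
      nrm2 Ω u + nrm2 Ω v ≤ C ^ 2) ∧
    (∃ C0 : ℝ, 0 < C0 ∧ ∀ β : ℝ, β ≤ 0 → ∀ u v : Euc N → ℝ, H10 Ω p u → H10 Ω p v →
      ¬ (∀ x ∈ Ω, u x = 0 ∧ v x = 0) →
      Qf Ω l1 l2 u v + Pf Ω p β u v = 0 →
      nrm2 Ω u + nrm2 Ω v ≤ C0 ^ 2) := by
  refine ⟨fun β hβ => ?_, ?_⟩
  · obtain ⟨C, hC, hbound⟩ := exists_pos_le_sq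
      (nehariConst Ω p l1 l2 * (nehariConst Ω p l1 l2 / (1 - max β 0)) ^ (2 / (p - 2)))
    exact ⟨C, hC, fun u v hu hv _ h => (nrm2_add_le_of_nehari hΩb hp1 (le_max_right β 0)
      (max_lt hβ one_pos) (le_max_left β 0) hu hv h).trans hbound⟩
  · obtain ⟨C, hC, hbound⟩ := exists_pos_le_sq
      (nehariConst Ω p l1 l2 * (nehariConst Ω p l1 l2 / (1 - 0)) ^ (2 / (p - 2)))
    exact ⟨C, hC, fun β hβ u v hu hv _ h =>
      (nrm2_add_le_of_nehari hΩb hp1 le_rfl one_pos hβ hu hv h).trans hbound⟩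

theorem stmt_0 {N : ℕ} (hN : 2 ≤ N) (Ω : Set (Euc N)) (hΩo : IsOpen Ω) (hΩb : IsBounded Ω)
    (p l1 l2 : ℝ) (hp1 : 2 < p) (hp2 : p < 2 * (N : ℝ) / ((N : ℝ) - 2)) :
    (∀ β : ℝ, β < 1 → ∃ C : ℝ, 0 < C ∧ ∀ u v : Euc N → ℝ, H10 Ω p u → H10 Ω p v →
      ¬ (∀ x ∈ Ω, u x = 0 ∧ v x = 0) →
      Qf Ω l1 l2 u v + Pf Ω p β u v = 0 →
      nrm2 Ω u + nrm2 Ω v ≤ C ^ 2) ∧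
    (∃ C0 : ℝ, 0 < C0 ∧ ∀ β : ℝ, β ≤ 0 → ∀ u v : Euc N → ℝ, H10 Ω p u → H10 Ω p v →
      ¬ (∀ x ∈ Ω, u x = 0 ∧ v x = 0) →
      Qf Ω l1 l2 u v + Pf Ω p β u v = 0 →
      nrm2 Ω u + nrm2 Ω v ≤ C0 ^ 2) :=
  stmt_0_general Ω hΩb p l1 l2 hp1
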